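/- Opposite Longitudinal Safety (Theorem 2): Let x1_k, v1_k, x2_k, v2_k (k = 0,…,n) be finite sequences of reals such that for every k < n there exist accelerations a1_k, a2_k and a duration t_k with 0 ≤ t_k ≤ ρ satisfying: either (free driving) safeDist_o(v1_k, v2_k) ≤ x2_k − x1_k and −a_maxBrake ≤ a1_k ≤ a_maxAccel and −a_maxAccel ≤ a2_k ≤ a_maxBrake, or (proper response) safeDist_o(v1_k, v2_k) ≥ x2_k − x1_k and (a1_k ≤ −a_minBrake or (v1_k = 0 and a1_k = 0)) and (a2_k ≥ a_minBrake or (v2_k = 0 and a2_k = 0)); moreover v1_k + a1_k·s ≥ 0 and v2_k + a2_k·s ≤ 0 for all s ∈ [0, t_k], and (x1_{k+1}, v1_{k+1}, x2_{k+1}, v2_{k+1}) is the kinematic update of (x1_k, v1_k, x2_k, v2_k) over duration t_k with accelerations a1_k, a2_k. If x1_0 ≤ x2_0 and safeDist_o(v1_0, v2_0) ≤ x2_0 − x1_0, then x1_k ≤ x2_k for all k = 0,…,n. -/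

import Mathlib

/-!
The invariant is `StopsInOrder`: the points where the two vehicles would come to rest when braking
at `aminBrake` are in order. A proper response only moves each stopping point away from the other
vehicle. A free-driving step of length at most `ρ` keeps each stopping point within that vehicle's
`rssStoppingDist` of its position at the start of the step, and these two distances add up to
`safeDistO`, which the gap covered at that moment.
-/

/-- RSS opposite-direction safe distance. -/
noncomputable def safeDistO (aminBrake amaxAccel ρ v1 v2 : ℝ) : ℝ :=
  ((v1 + (v1 + ρ * amaxAccel)) / 2) * ρ + (v1 + ρ * amaxAccel)^2 / (2 * aminBrake)
  + ((|v2| + (|v2| + ρ * amaxAccel)) / 2) * ρ + (|v2| + ρ * amaxAccel)^2 / (2 * aminBrake)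

/-- The distance covered by a vehicle of speed `v` that accelerates at rate `A` during the response
time `ρ` and then brakes at rate `β`. -/
noncomputable def rssStoppingDist (β A ρ v : ℝ) : ℝ :=
  ((v + (v + ρ * A)) / 2) * ρ + (v + ρ * A) ^ 2 / (2 * β)

lemma safeDistO_eq_add (β A ρ v1 v2 : ℝ) :
    safeDistO β A ρ v1 v2 = rssStoppingDist β A ρ v1 + rssStoppingDist β A ρ |v2| := by
  unfold safeDistO rssStoppingDist
  ring

section OneVehicle

variable {β A ρ v a t : ℝ}

lemma sq_add_two_mul_displacement_le_rssStoppingDist (hβ : 0 < β) (hA : 0 ≤ A) (hv : 0 ≤ v)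
    (ht : 0 ≤ t) (htρ : t ≤ ρ) (ha : a ≤ A) (hvt : 0 ≤ v + a * t) :
    (v + a * t) ^ 2 + 2 * β * (v * t + 1 / 2 * a * t ^ 2) ≤ 2 * β * rssStoppingDist β A ρ v := by
  have hat : a * t ≤ ρ * A := by
    linarith [mul_le_mul_of_nonneg_right ha ht, mul_le_mul_of_nonneg_left htρ hA]
  have hvel : (v + a * t) ^ 2 ≤ (v + ρ * A) ^ 2 := pow_le_pow_left₀ hvt (by linarith) 2
  have hdisp : v * t + 1 / 2 * a * t ^ 2 ≤ ((v + (v + ρ * A)) / 2) * ρ := by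
    linarith [mul_le_mul_of_nonneg_left htρ hv, mul_le_mul_of_nonneg_right ha (sq_nonneg t),
      mul_le_mul_of_nonneg_left (pow_le_pow_left₀ ht htρ 2) hA]
  have hdist : 2 * β * rssStoppingDist β A ρ v
      = 2 * β * (((v + (v + ρ * A)) / 2) * ρ) + (v + ρ * A) ^ 2 := by
    unfold rssStoppingDist
    field_simp
  linarith [mul_le_mul_of_nonneg_left hdisp (by linarith : (0 : ℝ) ≤ 2 * β)]

lemma sq_le_two_mul_rssStoppingDist (hβ : 0 < β) (hA : 0 ≤ A) (hρ : 0 ≤ ρ) (hv : 0 ≤ v) :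
    v ^ 2 ≤ 2 * β * rssStoppingDist β A ρ v := by
  simpa using sq_add_two_mul_displacement_le_rssStoppingDist (a := 0) hβ hA hv le_rfl hρ hA
    (by simpa using hv)

lemma sq_add_two_mul_displacement_le_sq (ha : a ≤ -β ∨ (v = 0 ∧ a = 0)) (ht : 0 ≤ t)
    (hv : 0 ≤ v) (hvt : 0 ≤ v + a * t) :
    (v + a * t) ^ 2 + 2 * β * (v * t + 1 / 2 * a * t ^ 2) ≤ v ^ 2 := by
  rcases ha with ha | ⟨rfl, rfl⟩
  · have hfactor : (v + a * t) ^ 2 + 2 * β * (v * t + 1 / 2 * a * t ^ 2) - v ^ 2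
        = (a + β) * (t * (v + (v + a * t))) := by ring
    have := mul_nonpos_of_nonpos_of_nonneg (by linarith : a + β ≤ 0)
      (mul_nonneg ht (add_nonneg hv hvt))
    linarith
  · simp

end OneVehicle

/-- Braking at rate `β`, vehicle 1 would stop at `x1 + v1² / (2β)` and the oncoming vehicle 2 at
`x2 - v2² / (2β)`; these stopping points are in order. -/
def StopsInOrder (β x1 v1 x2 v2 : ℝ) : Prop :=
  v1 ^ 2 + v2 ^ 2 ≤ 2 * β * (x2 - x1)

namespace StopsInOrder

variable {β A ρ x1 v1 x2 v2 a1 a2 t : ℝ}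

lemma le (hβ : 0 < β) (h : StopsInOrder β x1 v1 x2 v2) : x1 ≤ x2 := by
  unfold StopsInOrder at h
  nlinarith [sq_nonneg v1, sq_nonneg v2]

lemma of_safeDistO_le (hβ : 0 < β) (hA : 0 ≤ A) (hρ : 0 ≤ ρ) (hv1 : 0 ≤ v1)
    (hsafe : safeDistO β A ρ v1 v2 ≤ x2 - x1) : StopsInOrder β x1 v1 x2 v2 := by
  rw [safeDistO_eq_add] at hsafe
  have h1 := sq_le_two_mul_rssStoppingDist hβ hA hρ hv1
  have h2 := sq_le_two_mul_rssStoppingDist hβ hA hρ (abs_nonneg v2)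
  rw [sq_abs] at h2
  unfold StopsInOrder
  linarith [mul_le_mul_of_nonneg_left hsafe (by linarith : (0 : ℝ) ≤ 2 * β)]

lemma update_of_safeDistO_le (hβ : 0 < β) (hA : 0 ≤ A) (ht : 0 ≤ t) (htρ : t ≤ ρ)
    (hsafe : safeDistO β A ρ v1 v2 ≤ x2 - x1) (ha1 : a1 ≤ A) (ha2 : -A ≤ a2)
    (hv1 : 0 ≤ v1) (hv2 : v2 ≤ 0) (hv1t : 0 ≤ v1 + a1 * t) (hv2t : v2 + a2 * t ≤ 0) :
    StopsInOrder β (x1 + v1 * t + 1 / 2 * a1 * t ^ 2) (v1 + a1 * t)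
      (x2 + v2 * t + 1 / 2 * a2 * t ^ 2) (v2 + a2 * t) := by
  rw [safeDistO_eq_add, abs_of_nonpos hv2] at hsafe
  have h1 := sq_add_two_mul_displacement_le_rssStoppingDist hβ hA hv1 ht htρ ha1 hv1t
  have h2 := sq_add_two_mul_displacement_le_rssStoppingDist (v := -v2) (a := -a2) hβ hA
    (by linarith) ht htρ (by linarith) (by linarith)
  unfold StopsInOrder
  linarith [mul_le_mul_of_nonneg_left hsafe (by linarith : (0 : ℝ) ≤ 2 * β)]

lemma update_of_brake (h : StopsInOrder β x1 v1 x2 v2)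
    (ha1 : a1 ≤ -β ∨ (v1 = 0 ∧ a1 = 0)) (ha2 : β ≤ a2 ∨ (v2 = 0 ∧ a2 = 0)) (ht : 0 ≤ t)
    (hv1 : 0 ≤ v1) (hv2 : v2 ≤ 0) (hv1t : 0 ≤ v1 + a1 * t) (hv2t : v2 + a2 * t ≤ 0) :
    StopsInOrder β (x1 + v1 * t + 1 / 2 * a1 * t ^ 2) (v1 + a1 * t)
      (x2 + v2 * t + 1 / 2 * a2 * t ^ 2) (v2 + a2 * t) := by
  have h1 := sq_add_two_mul_displacement_le_sq ha1 ht hv1 hv1t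
  have h2 := sq_add_two_mul_displacement_le_sq (v := -v2) (a := -a2)
    (ha2.imp neg_le_neg fun ⟨hv, ha⟩ => ⟨neg_eq_zero.mpr hv, neg_eq_zero.mpr ha⟩) ht
    (by linarith) (by linarith)
  unfold StopsInOrder at h ⊢
  linarith

end StopsInOrder

theorem opposite_longitudinal_safety_general
    (aminBrake amaxBrake amaxAccel ρ : ℝ)
    (hmin : 0 < aminBrake)
    (hacc : 0 < amaxAccel) (hρ : 0 < ρ)
    (n : ℕ) (x1 v1 x2 v2 : ℕ → ℝ)
    (hstep : ∀ k < n, ∃ a1 a2 t : ℝ, 0 ≤ t ∧ t ≤ ρ ∧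
      ((safeDistO aminBrake amaxAccel ρ (v1 k) (v2 k) ≤ x2 k - x1 k ∧
        -amaxBrake ≤ a1 ∧ a1 ≤ amaxAccel ∧ -amaxAccel ≤ a2 ∧ a2 ≤ amaxBrake) ∨
       (safeDistO aminBrake amaxAccel ρ (v1 k) (v2 k) ≥ x2 k - x1 k ∧
        (a1 ≤ -aminBrake ∨ (v1 k = 0 ∧ a1 = 0)) ∧
        (a2 ≥ aminBrake ∨ (v2 k = 0 ∧ a2 = 0)))) ∧
      (∀ s : ℝ, 0 ≤ s → s ≤ t → v1 k + a1 * s ≥ 0 ∧ v2 k + a2 * s ≤ 0) ∧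
      x1 (k+1) = x1 k + v1 k * t + (1/2) * a1 * t^2 ∧
      v1 (k+1) = v1 k + a1 * t ∧
      x2 (k+1) = x2 k + v2 k * t + (1/2) * a2 * t^2 ∧
      v2 (k+1) = v2 k + a2 * t)
    (hinit1 : x1 0 ≤ x2 0)
    (hinit2 : safeDistO aminBrake amaxAccel ρ (v1 0) (v2 0) ≤ x2 0 - x1 0) :
    ∀ k ≤ n, x1 k ≤ x2 k := by
  have hsign : ∀ k < n, 0 ≤ v1 k ∧ v2 k ≤ 0 := fun k hk => by
    obtain ⟨a1, a2, t, ht0, -, -, hvel, -⟩ := hstep k hk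
    simpa using hvel 0 le_rfl ht0
  have hinv : ∀ k ≤ n, 0 < n →
      StopsInOrder aminBrake (x1 k) (v1 k) (x2 k) (v2 k) := by
    intro k hk hn
    induction k with
    | zero => exact .of_safeDistO_le hmin hacc.le hρ.le (hsign 0 hn).1 hinit2
    | succ k ih =>
      obtain ⟨a1, a2, t, ht0, htρ, hresp, hvel, hx1, hv1, hx2, hv2⟩ := hstep k hk
      obtain ⟨hv1t, hv2t⟩ := hvel t ht0 le_rfl
      obtain ⟨hv1k, hv2k⟩ := hsign k hk
      rw [hx1, hv1, hx2, hv2]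
      rcases hresp with ⟨hsafe, -, ha1, ha2, -⟩ | ⟨-, ha1, ha2⟩
      · exact .update_of_safeDistO_le hmin hacc.le ht0 htρ hsafe ha1 ha2 hv1k hv2k hv1t hv2t
      · exact (ih (Nat.le_of_succ_le hk)).update_of_brake ha1 ha2 ht0 hv1k hv2k hv1t hv2t
  intro k hk
  rcases Nat.eq_zero_or_pos n with rfl | hn
  · obtain rfl : k = 0 := by omega
    exact hinit1
  · exact (hinv k hk hn).le hmin

/-- Opposite Longitudinal Safety (Theorem 2). -/
theorem opposite_longitudinal_safety
    (aminBrake amaxBrake amaxAccel ρ : ℝ)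
    (hmin : 0 < aminBrake) (hminmax : aminBrake < amaxBrake)
    (hacc : 0 < amaxAccel) (hρ : 0 < ρ)
    (n : ℕ) (x1 v1 x2 v2 : ℕ → ℝ)
    (hstep : ∀ k < n, ∃ a1 a2 t : ℝ, 0 ≤ t ∧ t ≤ ρ ∧
      ((safeDistO aminBrake amaxAccel ρ (v1 k) (v2 k) ≤ x2 k - x1 k ∧
        -amaxBrake ≤ a1 ∧ a1 ≤ amaxAccel ∧ -amaxAccel ≤ a2 ∧ a2 ≤ amaxBrake) ∨
       (safeDistO aminBrake amaxAccel ρ (v1 k) (v2 k) ≥ x2 k - x1 k ∧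
        (a1 ≤ -aminBrake ∨ (v1 k = 0 ∧ a1 = 0)) ∧
        (a2 ≥ aminBrake ∨ (v2 k = 0 ∧ a2 = 0)))) ∧
      (∀ s : ℝ, 0 ≤ s → s ≤ t → v1 k + a1 * s ≥ 0 ∧ v2 k + a2 * s ≤ 0) ∧
      x1 (k+1) = x1 k + v1 k * t + (1/2) * a1 * t^2 ∧
      v1 (k+1) = v1 k + a1 * t ∧
      x2 (k+1) = x2 k + v2 k * t + (1/2) * a2 * t^2 ∧
      v2 (k+1) = v2 k + a2 * t)
    (hinit1 : x1 0 ≤ x2 0)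
    (hinit2 : safeDistO aminBrake amaxAccel ρ (v1 0) (v2 0) ≤ x2 0 - x1 0) :
    ∀ k ≤ n, x1 k ≤ x2 k :=
  opposite_longitudinal_safety_general aminBrake amaxBrake amaxAccel ρ hmin hacc hρ n x1 v1 x2 v2
    hstep hinit1 hinit2
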